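/- arXiv:math/0110295 — 6 statements merged into one kernel-verified Lean document; each statement's English description precedes it below -/
import Mathlib

section
/- Let f : X → Y be a rough isometry with constants a ≥ 1, b ≥ 0, let f⁻ : Y → X be a rough isometry with multiplicative constant a and additive constant b⁻ satisfying δ_X(f⁻(f(x)), x) < c_X for all x ∈ X. Then for every x₀ ∈ X and all r, R > 0 one has n_{a r + b⁻ + c_X}(B_X(x₀, R)) ≤ n_r(B_Y(f(x₀), a R + b)). -/
open Metric Filter Set
open scoped ENNReal

/-- Least number of open balls of radius `r` (arbitrary centres) needed to cover `Ω`;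
`⊤` if no finite cover exists. -/
noncomputable def coverNum {X : Type*} [MetricSpace X] (r : ℝ) (Ω : Set X) : ℕ∞ :=
  sInf ((fun s : Finset X => (s.card : ℕ∞)) '' {s | Ω ⊆ ⋃ y ∈ s, Metric.ball y r})

/-- Largest number of pairwise disjoint open balls of radius `r` with centres in `Ω`. -/
noncomputable def packNum {X : Type*} [MetricSpace X] (r : ℝ) (Ω : Set X) : ℕ∞ :=
  sSup ((fun s : Finset X => (s.card : ℕ∞)) ''
    {s | ↑s ⊆ Ω ∧ (s : Set X).Pairwise fun a b => Disjoint (Metric.ball a r) (Metric.ball b r)})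

/-- Logarithm of an extended natural number, valued in `[0,∞]`. -/
noncomputable def elog (n : ℕ∞) : ℝ≥0∞ :=
  if n = ⊤ then ⊤ else ENNReal.ofReal (Real.log n.toNat)

/-- The quantity `log n_r(B(x,R)) / log R`. -/
noncomputable def dimRatio {X : Type*} [MetricSpace X] (x : X) (r R : ℝ) : ℝ≥0∞ :=
  elog (coverNum r (Metric.ball x R)) / ENNReal.ofReal (Real.log R)

/-- The asymptotic dimension computed at the base point `x`:
`lim_{r→∞} limsup_{R→∞} log n_r(B(x,R)) / log R`; since the inner expression is
nonincreasing in `r`, the limit equals the infimum over `r > 0`. -/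
noncomputable def asympDimAt {X : Type*} [MetricSpace X] (x : X) : ℝ≥0∞ :=
  ⨅ (r : ℝ) (_ : 0 < r), Filter.limsup (fun R => dimRatio x r R) Filter.atTop

/-- The asymptotic dimension `d∞(X)` of a nonempty metric space. -/
noncomputable def asympDim (X : Type*) [MetricSpace X] [Nonempty X] : ℝ≥0∞ :=
  asympDimAt (Classical.arbitrary X)

/-- `f : X → Y` is a rough isometry with constants `a ≥ 1`, `b, ε ≥ 0` if
`a⁻¹ δ_X(x₁,x₂) − b ≤ δ_Y(f x₁, f x₂) ≤ a δ_X(x₁,x₂) + b` for all `x₁ x₂`, and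
the open balls of radius `ε` around points of the image cover `Y`. -/
def IsRoughIsometry {X Y : Type*} [MetricSpace X] [MetricSpace Y]
    (f : X → Y) (a b ε : ℝ) : Prop :=
  1 ≤ a ∧ 0 ≤ b ∧ 0 ≤ ε ∧
  (∀ x₁ x₂ : X,
    a⁻¹ * dist x₁ x₂ - b ≤ dist (f x₁) (f x₂) ∧ dist (f x₁) (f x₂) ≤ a * dist x₁ x₂ + b) ∧
  (∀ y : Y, ∃ x : X, dist y (f x) < ε)

/-- If `f : X → Y` is a rough isometry with constants `a, b` and `g : Y → X` is a
rough isometry with multiplicative constant `a` and additive constant `b'`, satisfying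
`dist (g (f x)) x < cX` for all `x`, then
`n_{a r + b' + cX}(B_X(x₀, R)) ≤ n_r(B_Y(f x₀, a R + b))`. -/
theorem coverNum_le_of_roughIsometry {X Y : Type*} [MetricSpace X] [MetricSpace Y]
    (f : X → Y) (g : Y → X) (a b ε b' ε' cX : ℝ)
    (hf : IsRoughIsometry f a b ε) (hg : IsRoughIsometry g a b' ε')
    (hgf : ∀ x : X, dist (g (f x)) x < cX)
    (x₀ : X) (r R : ℝ) (hr : 0 < r) (hR : 0 < R) :
    coverNum (a * r + b' + cX) (Metric.ball x₀ R) ≤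
      coverNum r (Metric.ball (f x₀) (a * R + b)) := by
  classical
  apply le_sInf
  rintro m ⟨s, hs, rfl⟩
  refine le_trans (sInf_le ⟨s.image g, ?_, rfl⟩) ?_
  · intro x hx
    have hfx : f x ∈ Metric.ball (f x₀) (a * R + b) := by
      rw [Metric.mem_ball] at hx ⊢
      calc dist (f x) (f x₀) ≤ a * dist x x₀ + b := (hf.2.2.2.1 x x₀).2
        _ < a * R + b := by nlinarith [hf.1]
    obtain ⟨y, hy, hxy⟩ := Set.mem_iUnion₂.mp (hs hfx)
    refine Set.mem_iUnion₂.mpr ⟨g y, Finset.mem_coe.mp (by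
      simpa using Finset.mem_image_of_mem g hy), ?_⟩
    rw [Metric.mem_ball] at hxy ⊢
    calc dist x (g y) ≤ dist x (g (f x)) + dist (g (f x)) (g y) := dist_triangle _ _ _
      _ ≤ cX + (a * dist (f x) y + b') := by
          have h1 := (hg.2.2.2.1 (f x) y).2
          have h2 := hgf x
          rw [dist_comm] at h2
          linarith
      _ < a * r + b' + cX := by
          have ha : (0:ℝ) < a := lt_of_lt_of_le one_pos hg.1
          have hd := dist_comm y (f x)
          nlinarith [dist_nonneg (x := f x) (y := y)]
  · show ((Finset.image g s).card : ℕ∞) ≤ (s.card : ℕ∞)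
    exact_mod_cast Finset.card_image_le
end

section
/- If there exists a rough isometry f : X → Y between two metric spaces X and Y, then their asymptotic dimensions coincide: d∞(X) = d∞(Y). -/
open Metric Filter Set
open scoped ENNReal

private lemma log_nat_nonneg (k : ℕ) : 0 ≤ Real.log k := by
  rcases Nat.eq_zero_or_pos k with h | h
  · simp [h]
  · exact Real.log_nonneg (by exact_mod_cast h)

private lemma elog_mono : Monotone elog := by
  intro n m h
  unfold elog
  rcases eq_or_ne m ⊤ with hm | hm
  · simp [hm]
  · have hn : n ≠ ⊤ := fun h' => hm (top_le_iff.mp (h' ▸ h))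
    rw [if_neg hn, if_neg hm]
    apply ENNReal.ofReal_le_ofReal
    rcases Nat.eq_zero_or_pos n.toNat with h0 | h0
    · simpa [h0] using log_nat_nonneg m.toNat
    · have hle : n.toNat ≤ m.toNat := ENat.toNat_le_toNat h hm
      exact Real.log_le_log (by exact_mod_cast h0) (by exact_mod_cast hle)

open scoped Classical in
private lemma coverNum_transfer {X Y : Type*} [MetricSpace X] [MetricSpace Y]
    {f : X → Y} {a b ε : ℝ} (hf : IsRoughIsometry f a b ε) (x0 : X) (y0 : Y)
    (r R : ℝ) :
    coverNum (a * r + b + ε) (Metric.ball y0 R) ≤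
      coverNum r (Metric.ball x0 (a * (R + (ε + dist y0 (f x0) + b)))) := by
  obtain ⟨ha, hb, hε, hdist, hdense⟩ := hf
  have ha0 : 0 < a := lt_of_lt_of_le one_pos ha
  apply le_sInf
  rintro n ⟨T, hT, rfl⟩
  simp only [Set.mem_setOf_eq] at hT
  have hcov : Metric.ball y0 R ⊆ ⋃ y ∈ T.image f, Metric.ball y (a * r + b + ε) := by
    intro y hy
    rw [Metric.mem_ball] at hy
    obtain ⟨x, hx⟩ := hdense y
    have hxball : x ∈ Metric.ball x0 (a * (R + (ε + dist y0 (f x0) + b))) := by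
      rw [Metric.mem_ball]
      have h1 : a⁻¹ * dist x x0 - b ≤ dist (f x) (f x0) := (hdist x x0).1
      have h2 : dist (f x) (f x0) ≤ dist (f x) y + dist y y0 + dist y0 (f x0) :=
        dist_triangle4 (f x) y y0 (f x0)
      rw [dist_comm (f x) y] at h2
      have h3 : a⁻¹ * dist x x0 < R + (ε + dist y0 (f x0) + b) := by linarith
      have := (inv_mul_lt_iff₀ ha0).mp h3
      linarith [this]
    obtain ⟨s, hsT, hs⟩ := by
      have := hT hxball
      simpa only [Set.mem_iUnion, exists_prop] using this
    rw [Metric.mem_ball] at hs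
    simp only [Set.mem_iUnion, exists_prop, Finset.mem_image]
    refine ⟨f s, ⟨s, hsT, rfl⟩, ?_⟩
    rw [Metric.mem_ball]
    have h4 : dist (f x) (f s) ≤ a * dist x s + b := (hdist x s).2
    have h5 : a * dist x s < a * r := mul_lt_mul_of_pos_left hs ha0
    calc dist y (f s) ≤ dist y (f x) + dist (f x) (f s) := dist_triangle _ _ _
      _ < ε + (a * r + b) := by linarith
      _ = a * r + b + ε := by ring
  calc coverNum (a * r + b + ε) (Metric.ball y0 R)
      ≤ ((T.image f).card : ℕ∞) := sInf_le ⟨T.image f, hcov, rfl⟩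
    _ ≤ (T.card : ℕ∞) := by exact_mod_cast Finset.card_image_le

private lemma limsup_transfer {X Y : Type*} [MetricSpace X] [MetricSpace Y]
    {f : X → Y} {a b ε : ℝ} (hf : IsRoughIsometry f a b ε)
    (x0 : X) (y0 : Y) (r : ℝ) {η : ℝ} (hη : 0 < η) :
    limsup (fun R => dimRatio y0 (a * r + b + ε) R) atTop ≤
      ENNReal.ofReal (1 + η) * limsup (fun R => dimRatio x0 r R) atTop := by
  have ha0 : 0 < a := lt_of_lt_of_le one_pos hf.1
  set K := ε + dist y0 (f x0) + b with hKdef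
  have hK0 : 0 ≤ K := add_nonneg (add_nonneg hf.2.2.1 dist_nonneg) hf.2.1
  set C := ENNReal.ofReal (1 + η) with hCdef
  have hCtop : C ≠ ⊤ := ENNReal.ofReal_ne_top
  have hC0 : C ≠ 0 := (ENNReal.ofReal_pos.mpr (by linarith)).ne'
  set φ : ℝ → ℝ := fun R => a * (R + K) with hφdef
  have hφ : Tendsto φ atTop atTop :=
    (tendsto_atTop_add_const_right atTop K tendsto_id).const_mul_atTop ha0
  have h_ev : ∀ᶠ R in atTop, dimRatio y0 (a * r + b + ε) R ≤ C * dimRatio x0 r (φ R) := by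
    have e1 : ∀ᶠ R : ℝ in atTop, 1 < R := eventually_gt_atTop 1
    have e2 : ∀ᶠ R : ℝ in atTop, K ≤ R := eventually_ge_atTop K
    have e3 : ∀ᶠ R : ℝ in atTop, Real.log (2 * a) ≤ η * Real.log R := by
      have := Real.tendsto_log_atTop.const_mul_atTop hη
      exact this.eventually_ge_atTop (Real.log (2 * a))
    filter_upwards [e1, e2, e3] with R hR1 hRK hRlog
    have hR0 : 0 < R := lt_trans one_pos hR1
    have hRK0 : 0 < R + K := by linarith
    have hlog : Real.log (φ R) ≤ (1 + η) * Real.log R := by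
      have h1 : Real.log (φ R) = Real.log a + Real.log (R + K) :=
        Real.log_mul (ne_of_gt ha0) (ne_of_gt hRK0)
      have h2 : Real.log (R + K) ≤ Real.log (2 * R) :=
        Real.log_le_log hRK0 (by linarith)
      have h3 : Real.log (2 * R) = Real.log 2 + Real.log R :=
        Real.log_mul two_ne_zero (ne_of_gt hR0)
      have h4 : Real.log (2 * a) = Real.log 2 + Real.log a :=
        Real.log_mul two_ne_zero (ne_of_gt ha0)
      nlinarith [hRlog]
    have hle : ENNReal.ofReal (Real.log (φ R)) ≤ C * ENNReal.ofReal (Real.log R) := by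
      rw [hCdef, ← ENNReal.ofReal_mul (by linarith : (0:ℝ) ≤ 1 + η)]
      exact ENNReal.ofReal_le_ofReal hlog
    set N := elog (coverNum r (Metric.ball x0 (φ R))) with hN
    have step1 : dimRatio y0 (a * r + b + ε) R ≤ N / ENNReal.ofReal (Real.log R) := by
      apply ENNReal.div_le_div_right
      exact elog_mono (coverNum_transfer hf x0 y0 r R)
    have step2 : N / ENNReal.ofReal (Real.log R) ≤ C * dimRatio x0 r (φ R) := by
      have : N / ENNReal.ofReal (Real.log R)
          = (C * N) / (C * ENNReal.ofReal (Real.log R)) :=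
        (ENNReal.mul_div_mul_left _ _ hC0 hCtop).symm
      rw [this, dimRatio, ← mul_div_assoc]
      exact ENNReal.div_le_div_left hle _
    exact le_trans step1 step2
  calc limsup (fun R => dimRatio y0 (a * r + b + ε) R) atTop
      ≤ limsup (fun R => C * dimRatio x0 r (φ R)) atTop := limsup_le_limsup h_ev
    _ = C * limsup (fun R => dimRatio x0 r (φ R)) atTop :=
        ENNReal.limsup_const_mul_of_ne_top hCtop
    _ ≤ C * limsup (fun R => dimRatio x0 r R) atTop := by
        gcongr
        rw [show (fun R => dimRatio x0 r (φ R)) = (fun R => dimRatio x0 r R) ∘ φ from rfl,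
          limsup_comp]
        exact limsup_le_limsup_of_le hφ

private lemma asympDimAt_le_of_rough {X Y : Type*} [MetricSpace X] [MetricSpace Y]
    {f : X → Y} {a b ε : ℝ} (hf : IsRoughIsometry f a b ε) (x0 : X) (y0 : Y) :
    asympDimAt y0 ≤ asympDimAt x0 := by
  have ha0 : 0 < a := lt_of_lt_of_le one_pos hf.1
  have hb := hf.2.1
  have hε := hf.2.2.1
  set A := asympDimAt y0 with hA
  set B := asympDimAt x0 with hB
  -- Step 1: ∀ η > 0, A ≤ ofReal (1+η) * B
  have key : ∀ η : ℝ, 0 < η → A ≤ ENNReal.ofReal (1 + η) * B := by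
    intro η hη
    set C := ENNReal.ofReal (1 + η) with hCdef
    have hCtop : C ≠ ⊤ := ENNReal.ofReal_ne_top
    have hC0 : C ≠ 0 := (ENNReal.ofReal_pos.mpr (by linarith)).ne'
    have h1 : ∀ r : ℝ, 0 < r → A / C ≤ limsup (fun R => dimRatio x0 r R) atTop := by
      intro r hr
      have hr' : 0 < a * r + b + ε := by nlinarith
      have hAle : A ≤ limsup (fun R => dimRatio y0 (a * r + b + ε) R) atTop :=
        iInf₂_le (a * r + b + ε) hr'
      have h2 := limsup_transfer hf x0 y0 r hη
      rw [ENNReal.div_le_iff_le_mul (Or.inl hC0) (Or.inl hCtop)]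
      calc A ≤ C * limsup (fun R => dimRatio x0 r R) atTop := le_trans hAle h2
        _ = limsup (fun R => dimRatio x0 r R) atTop * C := mul_comm _ _
    have h3 : A / C ≤ B := le_iInf₂ h1
    calc A = A / C * C := (ENNReal.div_mul_cancel hC0 hCtop).symm
      _ ≤ B * C := by gcongr
      _ = C * B := mul_comm _ _
  -- Step 2: conclude A ≤ B
  apply ENNReal.le_of_forall_pos_le_add
  intro δ hδ hBtop
  set t := B.toReal with ht
  have ht0 : 0 ≤ t := ENNReal.toReal_nonneg
  have hBt : B = ENNReal.ofReal t := by
    rw [ht, ENNReal.ofReal_toReal hBtop.ne]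
  set η := (δ : ℝ) / (t + 1) with hηdef
  have hη : 0 < η := div_pos (by exact_mod_cast hδ) (by linarith)
  calc A ≤ ENNReal.ofReal (1 + η) * B := key η hη
    _ = (1 + ENNReal.ofReal η) * B := by
        rw [ENNReal.ofReal_add (by norm_num) hη.le, ENNReal.ofReal_one]
    _ = B + ENNReal.ofReal η * B := by ring
    _ ≤ B + δ := by
        gcongr
        rw [hBt, ← ENNReal.ofReal_mul hη.le]
        calc ENNReal.ofReal (η * t) ≤ ENNReal.ofReal δ := by
              apply ENNReal.ofReal_le_ofReal
              rw [hηdef, div_mul_eq_mul_div, div_le_iff₀ (by linarith)]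
              nlinarith [NNReal.coe_nonneg δ]
          _ = (δ : ℝ≥0∞) := ENNReal.ofReal_coe_nnreal
    
private lemma exists_inverse {X Y : Type*} [MetricSpace X] [MetricSpace Y]
    {f : X → Y} {a b ε : ℝ} (hf : IsRoughIsometry f a b ε) :
    ∃ g : Y → X, IsRoughIsometry g a (a * (2 * ε + b)) (a * (ε + b) + 1) := by
  obtain ⟨ha, hb, hε, hdist, hdense⟩ := hf
  have ha0 : 0 < a := lt_of_lt_of_le one_pos ha
  have hainv : a⁻¹ ≤ a := by
    calc a⁻¹ ≤ 1 := inv_le_one_of_one_le₀ ha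
      _ ≤ a := ha
  choose g hg using hdense
  refine ⟨g, ha, by positivity, by positivity, ?_, ?_⟩
  · intro y₁ y₂
    have h1 := hg y₁
    have h2 := hg y₂
    have hup : dist (f (g y₁)) (f (g y₂)) ≤ dist y₁ y₂ + 2 * ε := by
      have := dist_triangle4 (f (g y₁)) y₁ y₂ (f (g y₂))
      rw [dist_comm (f (g y₁)) y₁] at this
      linarith
    have hlo : dist y₁ y₂ - 2 * ε ≤ dist (f (g y₁)) (f (g y₂)) := by
      have := dist_triangle4 y₁ (f (g y₁)) (f (g y₂)) y₂
      rw [dist_comm (f (g y₂)) y₂] at this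
      linarith
    have hd1 : a⁻¹ * dist (g y₁) (g y₂) - b ≤ dist (f (g y₁)) (f (g y₂)) := (hdist _ _).1
    have hd2 : dist (f (g y₁)) (f (g y₂)) ≤ a * dist (g y₁) (g y₂) + b := (hdist _ _).2
    constructor
    · have key : dist y₁ y₂ - 2 * ε - b ≤ a * dist (g y₁) (g y₂) := by linarith
      have h3 : a⁻¹ * (dist y₁ y₂ - 2 * ε - b) ≤ a⁻¹ * (a * dist (g y₁) (g y₂)) :=
        mul_le_mul_of_nonneg_left key (by positivity)
      rw [inv_mul_cancel_left₀ (ne_of_gt ha0)] at h3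
      have h4 : a⁻¹ * (2 * ε + b) ≤ a * (2 * ε + b) :=
        mul_le_mul_of_nonneg_right hainv (by positivity)
      nlinarith [mul_le_mul_of_nonneg_left key (le_of_lt (inv_pos.mpr ha0))]
    · have key : a⁻¹ * dist (g y₁) (g y₂) ≤ dist y₁ y₂ + 2 * ε + b := by linarith
      have h3 := mul_le_mul_of_nonneg_left key (le_of_lt ha0)
      rw [mul_inv_cancel_left₀ (ne_of_gt ha0)] at h3
      linarith [h3]
  · intro x
    refine ⟨f x, ?_⟩
    have h1 := hg (f x)
    have hd1 : a⁻¹ * dist x (g (f x)) - b ≤ dist (f x) (f (g (f x))) := (hdist _ _).1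
    have key : a⁻¹ * dist x (g (f x)) < ε + b := by linarith
    have h3 := mul_lt_mul_of_pos_left key ha0
    rw [mul_inv_cancel_left₀ (ne_of_gt ha0)] at h3
    linarith [h3]

/-- The asymptotic dimension is invariant under rough isometries. -/
theorem asympDim_eq_of_roughIsometry {X Y : Type*} [MetricSpace X] [MetricSpace Y]
    [Nonempty X] [Nonempty Y] (f : X → Y) (a b ε : ℝ)
    (hf : IsRoughIsometry f a b ε) :
    asympDim X = asympDim Y := by
  obtain ⟨g, hg⟩ := exists_inverse hf
  exact le_antisymm
    (asympDimAt_le_of_rough hg (Classical.arbitrary Y) (Classical.arbitrary X))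
    (asympDimAt_le_of_rough hf (Classical.arbitrary X) (Classical.arbitrary Y))
end

section
/- If X is a metric subspace of a metric space Y (a subset of Y with the induced metric), then d∞(X) ≤ d∞(Y). -/
open Metric Filter Set
open scoped ENNReal

/-!
A ball of radius `r` in `Y` that meets `X` lies in the ball of radius `2r` around any of its
points in `X`, so `n_{2r}(B_X(x,R)) ≤ n_r(B_Y(x,R))`; the doubling of `r` disappears in the limit
`r → ∞`. The base points of `X` and `Y` differ, which is harmless: `B(x,R) ⊆ B(y, R + c)` with
`c = d(x,y)`, and `log (R + c) / log R → 1`.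
-/

@[gcongr]
lemma coverNum_mono {X : Type*} [MetricSpace X] {r : ℝ} {A B : Set X} (h : A ⊆ B) :
    coverNum r A ≤ coverNum r B :=
  sInf_le_sInf (image_mono fun _ hs => h.trans hs)

@[gcongr]
lemma elog_le_elog {n m : ℕ∞} (h : n ≤ m) : elog n ≤ elog m := by
  rcases eq_or_ne m ⊤ with rfl | hm
  · simp [elog]
  have hn : n ≠ ⊤ := ne_top_of_le_ne_top hm h
  rw [elog, elog, if_neg hn, if_neg hm]
  rcases Nat.eq_zero_or_pos n.toNat with h0 | h0
  · simp [h0]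
  · exact ENNReal.ofReal_le_ofReal <| Real.log_le_log (by exact_mod_cast h0)
      (by exact_mod_cast ENat.toNat_le_toNat h hm)

lemma Isometry.coverNum_preimage_le {X Y : Type*} [MetricSpace X] [MetricSpace Y] [Nonempty X]
    {f : X → Y} (hf : Isometry f) (r : ℝ) (Ω : Set Y) :
    coverNum (2 * r) (f ⁻¹' Ω) ≤ coverNum r Ω := by
  classical
  refine sInf_le_sInf_of_isCoinitialFor ?_
  rintro _ ⟨s, hs, rfl⟩
  choose! g hg using fun y (h : ∃ z : X, dist (f z) y < r) => h
  refine ⟨_, ⟨s.image g, ?_, rfl⟩, by dsimp only; exact_mod_cast Finset.card_image_le⟩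
  intro p hp
  obtain ⟨y, hys, hpy⟩ := mem_iUnion₂.mp (hs hp)
  refine mem_iUnion₂.mpr ⟨g y, Finset.mem_image_of_mem g hys, ?_⟩
  rw [mem_ball, ← hf.dist_eq]
  calc dist (f p) (f (g y)) ≤ dist (f p) y + dist (f (g y)) y := dist_triangle_right _ _ _
    _ < r + r := add_lt_add hpy (hg y ⟨p, hpy⟩)
    _ = 2 * r := by ring

lemma Isometry.asympDimAt_le {X Y : Type*} [MetricSpace X] [MetricSpace Y] [Nonempty X]
    {f : X → Y} (hf : Isometry f) (x : X) : asympDimAt x ≤ asympDimAt (f x) := by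
  refine le_iInf₂ fun r hr => (iInf₂_le (2 * r) (by positivity)).trans ?_
  refine limsup_le_limsup (.of_forall fun R => ?_)
  show dimRatio x (2 * r) R ≤ dimRatio (f x) r R
  unfold dimRatio
  rw [← hf.preimage_ball]
  gcongr
  exact hf.coverNum_preimage_le r _

lemma Real.eventually_mul_log_add_le_log {t : ℝ} (ht₀ : 0 ≤ t) (ht₁ : t < 1) (c : ℝ) :
    ∀ᶠ R in atTop, t * Real.log (R + c) ≤ Real.log R := by
  have hgap := (Real.tendsto_log_comp_add_sub_log c).eventually (ge_mem_nhds one_pos)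
  have hlarge :=
    (Real.tendsto_log_atTop.const_mul_atTop (sub_pos.mpr ht₁)).eventually_ge_atTop t
  filter_upwards [hgap, hlarge] with R hgapR hlargeR
  nlinarith [mul_le_mul_of_nonneg_left hgapR ht₀]

lemma ENNReal.mul_div_le_div_of_mul_le {a e L L' : ℝ≥0∞} (h : a * L' ≤ L) :
    a * (e / L) ≤ e / L' := by
  rw [div_eq_mul_inv, div_eq_mul_inv, mul_left_comm]
  gcongr
  rw [ENNReal.le_inv_iff_mul_le, mul_right_comm]
  calc a * L' * L⁻¹ ≤ L * L⁻¹ := by gcongr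
    _ ≤ 1 := ENNReal.mul_inv_le_one L

section BasePoint

variable {X : Type*} [MetricSpace X]

lemma mul_dimRatio_le {x y : X} {r R R' : ℝ} {a : ℝ≥0∞} (hball : ball x R ⊆ ball y R')
    (hlog : a * ENNReal.ofReal (Real.log R') ≤ ENNReal.ofReal (Real.log R)) :
    a * dimRatio x r R ≤ dimRatio y r R' := by
  unfold dimRatio
  calc _ ≤ a * (elog (coverNum r (ball y R')) / _) := by gcongr
    _ ≤ _ := ENNReal.mul_div_le_div_of_mul_le hlog

lemma mul_limsup_dimRatio_le (x y : X) (r : ℝ) {a : ℝ≥0∞} (ha : a < 1) :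
    a * limsup (dimRatio x r) atTop ≤ limsup (dimRatio y r) atTop := by
  set c := dist x y
  calc a * limsup (dimRatio x r) atTop = limsup (fun R => a * dimRatio x r R) atTop :=
        (ENNReal.limsup_const_mul_of_ne_top ha.ne_top).symm
    _ ≤ limsup (fun R => dimRatio y r (R + c)) atTop := by
        refine limsup_le_limsup ?_
        filter_upwards [Real.eventually_mul_log_add_le_log ENNReal.toReal_nonneg
          (ENNReal.toReal_lt_of_lt_ofReal (by simpa using ha)) c] with R hR
        refine mul_dimRatio_le (ball_subset_ball' le_rfl) ?_
        rw [← ENNReal.ofReal_toReal ha.ne_top, ← ENNReal.ofReal_mul ENNReal.toReal_nonneg]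
        exact ENNReal.ofReal_le_ofReal hR
    _ = limsup (dimRatio y r) atTop := by
        rw [← Function.comp_def, limsup_comp, map_add_atTop_eq]

lemma asympDimAt_le_asympDimAt (x y : X) : asympDimAt x ≤ asympDimAt y :=
  ENNReal.le_of_forall_lt_one_mul_le fun a ha => le_iInf₂ fun r hr =>
    (mul_le_mul_right (iInf₂_le r hr) a).trans (mul_limsup_dimRatio_le x y r ha)

lemma asympDim_eq_asympDimAt [Nonempty X] (x : X) : asympDim X = asympDimAt x :=
  le_antisymm (asympDimAt_le_asympDimAt _ _) (asympDimAt_le_asympDimAt _ _)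

end BasePoint

/-- If `X` is a (nonempty) metric subspace of `Y`, then `d∞(X) ≤ d∞(Y)`. -/
theorem asympDim_subset_le {Y : Type*} [MetricSpace Y] [Nonempty Y]
    (X : Set Y) [Nonempty X] :
    asympDim X ≤ asympDim Y := by
  obtain ⟨x⟩ := ‹Nonempty X›
  rw [asympDim_eq_asympDimAt x, asympDim_eq_asympDimAt (x : Y)]
  exact isometry_subtype_coe.asympDimAt_le x
end

section
/- If a metric space (X, δ) carries a uniformly bounded Borel measure, then every ball in X is totally bounded; in particular, if in addition X is complete then X is locally compact (in fact proper). -/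
open Metric Filter Set
open scoped ENNReal

open MeasureTheory in
/-- A Borel measure `μ` on a metric space is uniformly bounded if for every `r > 0`,
`β₁(r) := inf_x μ(B(x,r)) > 0` and `β₂(r) := sup_x μ(B(x,r)) < ∞`. -/
def UniformlyBoundedMeasure {X : Type*} [MetricSpace X] [MeasurableSpace X]
    (μ : Measure X) : Prop :=
  ∀ r : ℝ, 0 < r →
    (0 < ⨅ x : X, μ (Metric.ball x r)) ∧ (⨆ x : X, μ (Metric.ball x r)) < ⊤

/-! If some ball `B(x, R)` were not totally bounded, it would contain an infinite `ε`-separated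
sequence. The balls of radius `ε / 2` around its points are pairwise disjoint, each has measure
at least `β₁(ε / 2) > 0`, and all of them lie in `B(x, R + ε / 2)`, whose measure is at most
`β₂(R + ε / 2) < ∞`: impossible. Totally bounded closed balls in a complete space are compact. -/

open MeasureTheory

lemma exists_seq_pairwise_le_dist_of_not_totallyBounded {X : Type*} [PseudoMetricSpace X]
    {s : Set X} (hs : ¬TotallyBounded s) :
    ∃ ε > 0, ∃ f : ℕ → X, (∀ n, f n ∈ s) ∧ Pairwise fun m n => ε ≤ dist (f m) (f n) := by
  rw [Metric.totallyBounded_iff] at hs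
  push Not at hs
  obtain ⟨ε, hε, hcover⟩ := hs
  have : Std.Symm fun a b : X => ε ≤ dist a b := ⟨fun a b h => by rwa [dist_comm]⟩
  have hextend : ∀ t : Finset X, (∀ z ∈ t, z ∈ s) → ∃ z ∈ s, ∀ y ∈ t, ε ≤ dist y z := by
    intro t _
    obtain ⟨z, hzs, hz⟩ := not_subset.1 (hcover t t.finite_toSet)
    simp only [mem_iUnion, mem_ball, not_exists, not_lt] at hz
    exact ⟨z, hzs, fun y hy => dist_comm z y ▸ hz y hy⟩
  obtain ⟨f, hfs, hf⟩ := exists_seq_of_forall_finset_exists' (· ∈ s) _ hextend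
  exact ⟨ε, hε, f, hfs, fun m n hmn => hf hmn⟩

lemma measure_iUnion_eq_top_of_le {α ι : Type*} [MeasurableSpace α] [Countable ι] [Infinite ι]
    {μ : Measure α} {s : ι → Set α} {c : ℝ≥0∞} (hc : c ≠ 0) (hle : ∀ i, c ≤ μ (s i))
    (hmeas : ∀ i, MeasurableSet (s i)) (hdisj : Pairwise (Function.onFun Disjoint s)) :
    μ (⋃ i, s i) = ⊤ := by
  rw [measure_iUnion hdisj hmeas, eq_top_iff, ← ENNReal.tsum_const_eq_top_of_ne_zero (α := ι) hc]
  exact ENNReal.tsum_le_tsum hle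

lemma ProperSpace.of_totallyBounded_ball {X : Type*} [PseudoMetricSpace X] [CompleteSpace X]
    (h : ∀ (x : X) (r : ℝ), TotallyBounded (ball x r)) : ProperSpace X :=
  ⟨fun x r => ((h x (r + 1)).subset (closedBall_subset_ball (lt_add_one r))).isCompact_of_isClosed
    isClosed_closedBall⟩

namespace UniformlyBoundedMeasure

variable {X : Type*} [MetricSpace X] [MeasurableSpace X] {μ : Measure X}

lemma measure_ball_lt_top (hμ : UniformlyBoundedMeasure μ) (x : X) {r : ℝ} (hr : 0 < r) :
    μ (ball x r) < ⊤ :=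
  (le_iSup (fun y => μ (ball y r)) x).trans_lt (hμ r hr).2

lemma totallyBounded_ball [OpensMeasurableSpace X] (hμ : UniformlyBoundedMeasure μ) (x : X)
    (R : ℝ) : TotallyBounded (ball x R) := by
  by_contra hnot
  obtain ⟨ε, hε, f, hf, hsep⟩ := exists_seq_pairwise_le_dist_of_not_totallyBounded hnot
  have hdisj : Pairwise (Function.onFun Disjoint fun n => ball (f n) (ε / 2)) :=
    fun m n hmn => ball_disjoint_ball (by linarith [hsep hmn])
  have hsub : (⋃ n, ball (f n) (ε / 2)) ⊆ ball x (R + ε / 2) :=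
    iUnion_subset fun n => ball_subset_ball' (by linarith [mem_ball.1 (hf n)])
  have htop : μ (⋃ n, ball (f n) (ε / 2)) = ⊤ :=
    measure_iUnion_eq_top_of_le (hμ (ε / 2) (by linarith)).1.ne' (fun n => iInf_le _ (f n))
      (fun _ => measurableSet_ball) hdisj
  have hR : 0 < R + ε / 2 := by linarith [pos_of_mem_ball (hf 0)]
  exact (hμ.measure_ball_lt_top x hR).ne (top_unique (htop ▸ measure_mono hsub))

end UniformlyBoundedMeasure

open MeasureTheory in
/-- If a metric space carries a uniformly bounded Borel measure, then every ball is
totally bounded; in particular, if moreover the space is complete, then it is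
locally compact (in fact proper). -/
theorem totallyBounded_ball_of_uniformlyBoundedMeasure
    {X : Type*} [MetricSpace X] [MeasurableSpace X] [BorelSpace X]
    (μ : Measure X) (hμ : UniformlyBoundedMeasure μ) :
    (∀ (x : X) (R : ℝ), TotallyBounded (Metric.ball x R)) ∧
    (CompleteSpace X → LocallyCompactSpace X ∧ ProperSpace X) := by
  refine ⟨hμ.totallyBounded_ball, fun _ => ?_⟩
  have : ProperSpace X := .of_totallyBounded_ball hμ.totallyBounded_ball
  exact ⟨inferInstance, this⟩
end

section
/- If μ is a uniformly bounded Borel measure on a metric space (X, δ), then for every x ∈ X the asymptotic dimension of X equals the volume growth exponent: d∞(X) = limsup_{R→∞} (log μ(B(x,R)) / log R). -/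
open Metric Filter Set
open scoped ENNReal

/-- Logarithm of an extended nonnegative real, valued in `[0,∞]`. -/
noncomputable def elogENN (v : ℝ≥0∞) : ℝ≥0∞ :=
  if v = ⊤ then ⊤ else ENNReal.ofReal (Real.log v.toReal)

/-!
Covering numbers and volumes of balls control each other up to constants and a bounded change
of radius. A cover of `Ω` by `N` balls of radius `r` gives `μ Ω ≤ N · sup_y μ(B(y,r))`;
conversely a maximal family of disjoint `r`-balls centred in `B(x,R)` is a cover by `2r`-balls,
and its balls fill at most `B(x,R+r)`, so `n_{2r}(B(x,R)) · inf_y μ(B(y,r)) ≤ μ(B(x,R+r))`.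
The exponent `limsup_{R→∞} log f(R) / log R` does not see multiplicative constants, nor shifts
`R ↦ R + c` (as `log (R + c) / log R → 1`), so it takes the same value on both sides.
-/

open Topology MeasureTheory

lemma elog_eq_elogENN (n : ℕ∞) : elog n = elogENN n := by
  induction n using ENat.recTopCoe <;> simp [elog, elogENN]

lemma elogENN_ne_top {a : ℝ≥0∞} (h : a ≠ ⊤) : elogENN a ≠ ⊤ := by
  simp [elogENN, h]

lemma elogENN_mono : Monotone elogENN := by
  intro a b hab
  rcases eq_or_ne b ⊤ with rfl | hb
  · simp [elogENN]
  have ha : a ≠ ⊤ := ne_top_of_le_ne_top hb hab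
  rcases eq_or_ne a 0 with rfl | ha0
  · simp [elogENN]
  simp only [elogENN, if_neg ha, if_neg hb]
  exact ENNReal.ofReal_le_ofReal <| Real.log_le_log (ENNReal.toReal_pos ha0 ha)
    ((ENNReal.toReal_le_toReal ha hb).mpr hab)

lemma elogENN_mul_le (a b : ℝ≥0∞) : elogENN (a * b) ≤ elogENN a + elogENN b := by
  rcases eq_or_ne a 0 with rfl | ha0
  · simp [elogENN]
  rcases eq_or_ne b 0 with rfl | hb0
  · simp [elogENN]
  rcases eq_or_ne a ⊤ with rfl | ha
  · simp [elogENN]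
  rcases eq_or_ne b ⊤ with rfl | hb
  · simp [elogENN]
  simp only [elogENN, if_neg (ENNReal.mul_ne_top ha hb), if_neg ha, if_neg hb,
    ENNReal.toReal_mul]
  rw [Real.log_mul (ENNReal.toReal_ne_zero.mpr ⟨ha0, ha⟩)
    (ENNReal.toReal_ne_zero.mpr ⟨hb0, hb⟩)]
  exact ENNReal.ofReal_add_le

noncomputable def growthExponent (f : ℝ → ℝ≥0∞) : ℝ≥0∞ :=
  limsup (fun R => elogENN (f R) / ENNReal.ofReal (Real.log R)) atTop

lemma growthExponent_mono {f g : ℝ → ℝ≥0∞} (h : f ≤ᶠ[atTop] g) :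
    growthExponent f ≤ growthExponent g :=
  limsup_le_limsup (h.mono fun _ hR => ENNReal.div_le_div_right (elogENN_mono hR) _)

lemma growthExponent_const_mul_le {K : ℝ≥0∞} (hK : K ≠ ⊤) (f : ℝ → ℝ≥0∞) :
    growthExponent (fun R => K * f R) ≤ growthExponent f := by
  have hK0 : Tendsto (fun R => elogENN K / ENNReal.ofReal (Real.log R)) atTop (𝓝 0) := by
    simpa using ENNReal.Tendsto.const_div
      (ENNReal.tendsto_ofReal_atTop.comp Real.tendsto_log_atTop) (Or.inr (elogENN_ne_top hK))
  calc growthExponent (fun R => K * f R)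
      ≤ limsup ((fun R => elogENN K / ENNReal.ofReal (Real.log R)) +
          fun R => elogENN (f R) / ENNReal.ofReal (Real.log R)) atTop :=
        limsup_le_limsup (.of_forall fun R => by
          simpa only [Pi.add_apply, ENNReal.add_div] using
            ENNReal.div_le_div_right (elogENN_mul_le K (f R)) _)
    _ = growthExponent f := ENNReal.limsup_add_of_left_tendsto_zero hK0 _

lemma tendsto_log_add_const_div_log (c : ℝ) :
    Tendsto (fun R => Real.log (R + c) / Real.log R) atTop (𝓝 1) := by
  have h := (Real.tendsto_log_comp_add_sub_log c).div_atTop Real.tendsto_log_atTop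
  rw [← add_zero (1 : ℝ)]
  refine (tendsto_const_nhds.add h).congr' ?_
  filter_upwards [Real.tendsto_log_atTop.eventually_gt_atTop 0] with R hR
  field_simp
  ring

lemma growthExponent_comp_add_le (f : ℝ → ℝ≥0∞) (c : ℝ) :
    growthExponent (fun R => f (R + c)) ≤ growthExponent f := by
  set u := fun R => elogENN (f R) / ENNReal.ofReal (Real.log R)
  have hshift : limsup (fun R => u (R + c)) atTop ≤ growthExponent f := by
    rw [← Function.comp_def, limsup_comp]
    exact limsup_le_limsup_of_le (tendsto_atTop_add_const_right _ c tendsto_id)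
  have hratio :
      Tendsto (fun R => ENNReal.ofReal (Real.log (R + c) / Real.log R)) atTop (𝓝 1) := by
    simpa using ENNReal.tendsto_ofReal (tendsto_log_add_const_div_log c)
  calc growthExponent (fun R => f (R + c))
      = limsup ((fun R => u (R + c)) *
          fun R => ENNReal.ofReal (Real.log (R + c) / Real.log R)) atTop := by
        refine limsup_congr ?_
        filter_upwards [eventually_gt_atTop 1, eventually_gt_atTop (1 - c)] with R hR hRc
        have h1 : 0 < Real.log R := Real.log_pos hR
        have h2 : 0 < Real.log (R + c) := Real.log_pos (by linarith)
        simp only [u, Pi.mul_apply, ENNReal.ofReal_div_of_pos h1]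
        rw [← mul_div_assoc, ENNReal.div_mul_cancel (by simpa using h2) ENNReal.ofReal_ne_top]
    _ ≤ limsup (fun R => u (R + c)) atTop * 1 := by
        rw [← hratio.limsup_eq]
        exact ENNReal.limsup_mul_le' (Or.inr (by simp [hratio.limsup_eq]))
          (Or.inr (by simp [hratio.limsup_eq]))
    _ ≤ growthExponent f := by rw [mul_one]; exact hshift

section Covering

variable {X : Type*} [MetricSpace X]

lemma card_le_packNum {r : ℝ} {Ω : Set X} {s : Finset X} (hsΩ : ↑s ⊆ Ω)
    (hs : (s : Set X).Pairwise fun a b => Disjoint (ball a r) (ball b r)) :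
    (s.card : ℕ∞) ≤ packNum r Ω :=
  le_sSup ⟨s, ⟨hsΩ, hs⟩, rfl⟩

lemma coverNum_two_mul_le_packNum {r : ℝ} (hr : 0 < r) (Ω : Set X) :
    coverNum (2 * r) Ω ≤ packNum r Ω := by
  classical
  rcases eq_or_ne (packNum r Ω) ⊤ with htop | hfin
  · simp [htop]
  -- `packNum r Ω` is finite, so some packing `s` attains it; a point of `Ω` outside the
  -- `2r`-balls around `s` could be added to `s`.
  have : Nonempty ((fun s : Finset X => (s.card : ℕ∞)) '' {s | ↑s ⊆ Ω ∧
      (s : Set X).Pairwise fun a b => Disjoint (ball a r) (ball b r)}) :=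
    ⟨0, ∅, by simp, rfl⟩
  obtain ⟨s, ⟨hsΩ, hs⟩, hcard⟩ : packNum r Ω ∈ _ :=
    ENat.sSup_mem_of_nonempty_of_lt_top hfin.lt_top
  rw [← hcard]
  refine sInf_le ⟨s, fun z hzΩ => ?_, rfl⟩
  by_contra hz
  simp only [mem_iUnion, mem_ball, not_exists, not_lt] at hz
  have hzs : z ∉ s := fun h => by linarith [hz z h, dist_self z]
  have hpack :
      ((insert z s : Finset X) : Set X).Pairwise fun a b => Disjoint (ball a r) (ball b r) :=
    Finset.coe_insert z s ▸ pairwise_insert.2 ⟨hs, fun y hy _ =>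
      ⟨ball_disjoint_ball (by linarith [hz y hy]),
        ball_disjoint_ball (by linarith [hz y hy, dist_comm z y])⟩⟩
  have := card_le_packNum (Finset.coe_insert z s ▸ insert_subset hzΩ hsΩ) hpack
  rw [← hcard, Finset.card_insert_of_notMem hzs] at this
  exact (ENat.lt_add_one_iff (ENat.natCast_ne_top _)).2 le_rfl |>.not_ge this

lemma asympDimAt_eq_iInf_growthExponent (x : X) :
    asympDimAt x = ⨅ (r : ℝ) (_ : 0 < r), growthExponent fun R => coverNum r (ball x R) := by
  simp only [asympDimAt, dimRatio, growthExponent, elog_eq_elogENN]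

end Covering

section Measure

variable {X : Type*} [MetricSpace X] [MeasurableSpace X] {μ : Measure X}

lemma measure_le_coverNum_mul_iSup {r : ℝ} (Ω : Set X)
    (h0 : (⨆ y, μ (ball y r)) ≠ 0) :
    μ Ω ≤ coverNum r Ω * ⨆ y, μ (ball y r) := by
  rcases eq_or_ne (coverNum r Ω) ⊤ with htop | hfin
  · simp [htop, ENNReal.top_mul h0]
  obtain ⟨s, hs, hcard⟩ : coverNum r Ω ∈ _ :=
    csInf_mem (nonempty_iff_ne_empty.2 fun h => hfin (by rw [coverNum, h, sInf_empty]))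
  calc μ Ω ≤ ∑ y ∈ s, μ (ball y r) :=
        (measure_mono hs).trans (measure_biUnion_finset_le s _)
    _ ≤ ∑ _y ∈ s, ⨆ z, μ (ball z r) :=
        Finset.sum_le_sum fun y _ => le_iSup (μ <| ball · r) y
    _ = coverNum r Ω * ⨆ y, μ (ball y r) := by
        rw [← hcard]
        simp

lemma packNum_mul_iInf_le_measure [OpensMeasurableSpace X] (r : ℝ) (Ω : Set X) :
    packNum r Ω * ⨅ y, μ (ball y r) ≤ μ (thickening r Ω) := by
  simp only [packNum, sSup_image, ENat.toENNReal_iSup, ENNReal.iSup_mul, iSup_le_iff]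
  rintro s ⟨hsΩ, hs⟩
  calc (s.card : ℝ≥0∞) * ⨅ y, μ (ball y r) = ∑ _y ∈ s, ⨅ z, μ (ball z r) := by simp
    _ ≤ ∑ y ∈ s, μ (ball y r) := Finset.sum_le_sum fun y _ => iInf_le _ y
    _ = μ (⋃ y ∈ s, ball y r) := (measure_biUnion_finset hs fun _ _ => measurableSet_ball).symm
    _ ≤ μ (thickening r Ω) :=
        measure_mono (iUnion₂_subset fun y hy => ball_subset_thickening (hsΩ hy) r)

lemma growthExponent_measure_ball_le (x y : X) :
    growthExponent (fun R => μ (ball x R)) ≤ growthExponent (fun R => μ (ball y R)) :=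
  calc growthExponent (fun R => μ (ball x R))
      ≤ growthExponent (fun R => μ (ball y (R + dist x y))) :=
        growthExponent_mono (.of_forall fun _ => measure_mono (ball_subset_ball' le_rfl))
    _ ≤ growthExponent (fun R => μ (ball y R)) :=
        growthExponent_comp_add_le (fun R => μ (ball y R)) (dist x y)

lemma asympDimAt_le_growthExponent [OpensMeasurableSpace X] (hμ : UniformlyBoundedMeasure μ)
    (x : X) : asympDimAt x ≤ growthExponent fun R => μ (ball x R) := by
  obtain ⟨hβ0, hβtop⟩ := hμ 1 one_pos
  set β := ⨅ y, μ (ball y 1)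
  have hβ : β ≠ ⊤ :=
    ((iInf_le _ x).trans_lt ((le_iSup (μ <| ball · 1) x).trans_lt hβtop)).ne
  have hcover (R : ℝ) :
      (coverNum 2 (ball x R) : ℝ≥0∞) ≤ β⁻¹ * μ (ball x (R + 1)) := by
    rw [← ENNReal.div_eq_inv_mul, ENNReal.le_div_iff_mul_le (.inl hβ0.ne') (.inl hβ)]
    calc (coverNum 2 (ball x R) : ℝ≥0∞) * β ≤ packNum 1 (ball x R) * β := by
          gcongr
          simpa using coverNum_two_mul_le_packNum one_pos (ball x R)
      _ ≤ μ (thickening 1 (ball x R)) := packNum_mul_iInf_le_measure 1 _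
      _ ≤ μ (ball x (R + 1)) :=
          measure_mono ((thickening_ball x 1 R).trans_eq (by rw [add_comm]))
  calc asympDimAt x ≤ growthExponent fun R => coverNum 2 (ball x R) := by
        rw [asympDimAt_eq_iInf_growthExponent]
        exact iInf₂_le 2 two_pos
    _ ≤ growthExponent fun R => β⁻¹ * μ (ball x (R + 1)) :=
        growthExponent_mono (.of_forall hcover)
    _ ≤ growthExponent fun R => μ (ball x (R + 1)) :=
        growthExponent_const_mul_le (ENNReal.inv_ne_top.2 hβ0.ne') _
    _ ≤ growthExponent fun R => μ (ball x R) :=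
        growthExponent_comp_add_le (fun R => μ (ball x R)) 1

lemma growthExponent_le_asympDimAt (hμ : UniformlyBoundedMeasure μ) (x : X) :
    (growthExponent fun R => μ (ball x R)) ≤ asympDimAt x := by
  rw [asympDimAt_eq_iInf_growthExponent]
  refine le_iInf₂ fun r hr => ?_
  obtain ⟨hβ0, hβtop⟩ := hμ r hr
  have hβ : (⨆ y, μ (ball y r)) ≠ 0 :=
    (hβ0.trans_le ((iInf_le _ x).trans (le_iSup (μ <| ball · r) x))).ne'
  calc (growthExponent fun R => μ (ball x R))
      ≤ growthExponent fun R => (⨆ y, μ (ball y r)) * coverNum r (ball x R) :=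
        growthExponent_mono (.of_forall fun R => by
          simpa only [mul_comm] using measure_le_coverNum_mul_iSup (ball x R) hβ)
    _ ≤ growthExponent fun R => coverNum r (ball x R) := growthExponent_const_mul_le hβtop.ne _

end Measure

open MeasureTheory in
/-- If `μ` is a uniformly bounded Borel measure on `X`, then for every `x ∈ X` the
asymptotic dimension equals the volume growth exponent:
`d∞(X) = limsup_{R→∞} log μ(B(x,R)) / log R`. -/
theorem asympDim_eq_volume_growth
    {X : Type*} [MetricSpace X] [MeasurableSpace X] [BorelSpace X] [Nonempty X]
    (μ : Measure X) (hμ : UniformlyBoundedMeasure μ) (x : X) :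
    asympDim X =
      Filter.limsup
        (fun R => elogENN (μ (Metric.ball x R)) / ENNReal.ofReal (Real.log R))
        Filter.atTop := by
  set x₀ := Classical.arbitrary X
  refine le_antisymm ?_ ?_
  · exact (asympDimAt_le_growthExponent hμ x₀).trans (growthExponent_measure_ball_le x₀ x)
  · exact (growthExponent_measure_ball_le x x₀).trans (growthExponent_le_asympDimAt hμ x₀)
end

section
/- Let H be an infinite-dimensional Hilbert space with an orthonormal basis (e_i)_{i∈ℕ}, and let X ⊂ H be the ℤ-lattice generated by the basis, i.e. the set of all finite integer linear combinations of the e_i, with the metric induced by the norm of H. Then d∞(X) = ∞. -/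
open Metric Filter Set
open scoped ENNReal

/-!
Two points of a `2r`-separated set never share an `r`-ball, so a ball containing infinitely many
of them has no finite cover by `r`-balls, and every ratio `log n_r(B(x,R)) / log R` is `∞` once
`R` is large. In the lattice, the points `m e_j` with an integer `m ≥ 2r` form such a bounded set:
they have norm `m` and pairwise distance `m√2`.
-/

section Covering

variable {X : Type*} [MetricSpace X]

theorem coverNum_eq_top_of_separated {ι : Type*} [Infinite ι] {r : ℝ} {Ω : Set X}
    (f : ι → X) (hfΩ : ∀ i, f i ∈ Ω) (hsep : Pairwise fun i j => 2 * r ≤ dist (f i) (f j)) :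
    coverNum r Ω = ⊤ := by
  rw [coverNum, sInf_eq_top]
  rintro _ ⟨s, hcover, rfl⟩
  exfalso
  have hcentre : ∀ i, ∃ y ∈ s, f i ∈ ball y r := fun i => by
    simpa using hcover (hfΩ i)
  choose c hcs hcr using hcentre
  obtain ⟨i, j, hij, hc⟩ :=
    Finite.exists_ne_map_eq_of_infinite fun i => (⟨c i, hcs i⟩ : s)
  have hcij : c i = c j := congrArg Subtype.val hc
  have : dist (f i) (f j) < 2 * r := calc
    dist (f i) (f j) ≤ dist (f i) (c i) + dist (f j) (c j) := by
      rw [hcij]; exact dist_triangle_right _ _ _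
    _ < r + r := add_lt_add (hcr i) (hcr j)
    _ = 2 * r := (two_mul r).symm
  exact (hsep hij).not_gt this

theorem elog_top : elog ⊤ = ⊤ := if_pos rfl

theorem dimRatio_eq_top {x : X} {r R : ℝ} (h : coverNum r (ball x R) = ⊤) :
    dimRatio x r R = ⊤ := by
  rw [dimRatio, h, elog_top]
  exact ENNReal.top_div_of_ne_top ENNReal.ofReal_ne_top

theorem asympDimAt_eq_top_of_separated (x : X)
    (h : ∀ r > 0, ∃ f : ℕ → X,
      Bornology.IsBounded (range f) ∧ Pairwise fun i j => 2 * r ≤ dist (f i) (f j)) :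
    asympDimAt x = ⊤ := by
  simp only [asympDimAt, iInf_eq_top]
  intro r hr
  obtain ⟨f, hbdd, hsep⟩ := h r hr
  obtain ⟨R₀, hR₀⟩ := hbdd.subset_ball x
  have hR : ∀ᶠ R in atTop, dimRatio x r R = ⊤ := by
    filter_upwards [eventually_ge_atTop R₀] with R hR
    exact dimRatio_eq_top <| coverNum_eq_top_of_separated f
      (fun i => ball_subset_ball hR (hR₀ (mem_range_self i))) hsep
  rw [limsup_congr hR, limsup_const]

end Covering

theorem Orthonormal.norm_sub_eq_sqrt_two {ι E : Type*} [NormedAddCommGroup E]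
    [InnerProductSpace ℝ E] {v : ι → E} (hv : Orthonormal ℝ v) {i j : ι} (hij : i ≠ j) :
    ‖v i - v j‖ = √2 := by
  have hsq : ‖v i - v j‖ ^ 2 = 2 := by
    rw [norm_sub_sq_real, hv.1 i, hv.1 j, hv.2 hij]
    norm_num
  rw [← hsq, Real.sqrt_sq (norm_nonneg _)]

/-- The `ℤ`-lattice generated by an orthonormal basis of an infinite-dimensional
Hilbert space, i.e. the set of finite integer linear combinations of the basis
vectors, has asymptotic dimension `∞`. -/
theorem asympDim_lattice_eq_top
    {H : Type*} [NormedAddCommGroup H] [InnerProductSpace ℝ H]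
    (b : HilbertBasis ℕ ℝ H) :
    @asympDim
      ↥{x : H | ∃ (s : Finset ℕ) (c : ℕ → ℤ), x = ∑ i ∈ s, (c i : ℝ) • b i} _
      ⟨⟨0, ⟨∅, fun _ => 0, by simp⟩⟩⟩ = ⊤ := by
  refine asympDimAt_eq_top_of_separated _ fun r _ => ?_
  obtain ⟨m, hm⟩ := exists_nat_ge (2 * r)
  let f : ℕ → {x : H | ∃ (s : Finset ℕ) (c : ℕ → ℤ), x = ∑ i ∈ s, (c i : ℝ) • b i} :=
    fun j => ⟨(m : ℝ) • b j, {j}, fun _ => m, by simp⟩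
  have hdist : ∀ i j, dist (f i) (f j) = m * ‖b i - b j‖ := fun i j => by
    rw [Subtype.dist_eq, dist_eq_norm, ← smul_sub, norm_smul, Real.norm_natCast]
  refine ⟨f, isBounded_range_iff.mpr ⟨m * 2, fun i j => ?_⟩, fun i j hij => ?_⟩
  · rw [hdist]
    gcongr
    calc ‖b i - b j‖ ≤ ‖b i‖ + ‖b j‖ := norm_sub_le _ _
      _ = 2 := by rw [b.orthonormal.1 i, b.orthonormal.1 j]; norm_num
  · show 2 * r ≤ dist (f i) (f j)
    rw [hdist, b.orthonormal.norm_sub_eq_sqrt_two hij]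
    calc 2 * r ≤ m := hm
      _ ≤ m * √2 := le_mul_of_one_le_right m.cast_nonneg (Real.one_le_sqrt.mpr one_le_two)
end
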